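/- arXiv:2210.03937 — 4 statements merged into one kernel-verified Lean document; each statement's English description precedes it below -/
import Mathlib

section
/- Let θ > 0 be irrational with convergents p_k/q_k, let s ∈ (0,1), and suppose k is even and 1/q_{k+1} < 1 − s. Then there exists s' ∈ (0,1) such that no point of the integer lattice ℤ² lies strictly between the lines y = θx + s and y = (p_k/q_k)x + s' over the interval 0 ≤ x ≤ q_k; more precisely, for every integer l with 0 ≤ l ≤ q_k − 1, the real numbers θl + s and (p_k/q_k)l + s' have the same integer part. -/
/-! With `m l = q ⌊θ l + s⌋ - p l` one has `p l / q + s' = ⌊θ l + s⌋ + (s' q - m l) / q`, so `s'`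
works as soon as `0 ≤ s' q - m l < q` for every `0 ≤ l < q`. The approximation `|q θ - p| ≤ 1 / q`
keeps every difference `m l - m l'` below `q + 1`, and coprimality of `p` and `q` rules out the
difference `q`; so the `m l` lie in a window of `q` consecutive integers containing `m 0 = 0`, and
`s' = (max m + 1/2) / q` lies in `(0, 1)` and works. Convergents satisfy both hypotheses once `cfP`
and `cfQ` are identified with the numerators and denominators of `GenContFract.of θ`. -/

open Filter Topology

/-- Iterates of the Gauss map starting at `θ`. -/
noncomputable def gaussIter (θ : ℝ) : ℕ → ℝ
  | 0 => θ
  | k + 1 => (Int.fract (gaussIter θ k))⁻¹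

/-- The `k`-th partial quotient (digit) of the continued fraction of `θ`. -/
noncomputable def cfA (θ : ℝ) (k : ℕ) : ℤ := ⌊gaussIter θ k⌋

/-- Numerators of the continued fraction convergents of `θ`. -/
noncomputable def cfP (θ : ℝ) : ℕ → ℤ
  | 0 => cfA θ 0
  | 1 => cfA θ 1 * cfA θ 0 + 1
  | k + 2 => cfA θ (k + 2) * cfP θ (k + 1) + cfP θ k

/-- Denominators of the continued fraction convergents of `θ`. -/
noncomputable def cfQ (θ : ℝ) : ℕ → ℤ
  | 0 => 1
  | 1 => cfA θ 1
  | k + 2 => cfA θ (k + 2) * cfQ θ (k + 1) + cfQ θ k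

noncomputable def floorOffset (θ s : ℝ) (p q l : ℤ) : ℤ := q * ⌊θ * l + s⌋ - p * l

section FloorOffset

variable {θ s : ℝ} {p q : ℤ}

theorem floorOffset_zero (hs : s ∈ Set.Ico 0 1) : floorOffset θ s p q 0 = 0 := by
  simp [floorOffset, Int.floor_eq_zero_iff.mpr hs]

theorem floorOffset_sub_floorOffset_lt (hq : 0 < q) (l l' : ℤ) :
    (floorOffset θ s p q l - floorOffset θ s p q l' : ℝ) < q + (q * θ - p) * (l - l') := by
  have hq' : (0 : ℝ) < q := by exact_mod_cast hq
  have h := Int.floor_le (θ * l + s)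
  have h' := Int.lt_floor_add_one (θ * l' + s)
  simp only [floorOffset, Int.cast_sub, Int.cast_mul]
  nlinarith

theorem eq_of_dvd_floorOffset_sub (hpq : IsCoprime p q) {l l' : ℤ}
    (hdvd : q ∣ floorOffset θ s p q l - floorOffset θ s p q l') (hll' : |l - l'| < q) :
    l = l' := by
  have hdvd' : q ∣ p * (l - l') := by
    have : p * (l - l') = q * (⌊θ * l + s⌋ - ⌊θ * l' + s⌋)
        - (floorOffset θ s p q l - floorOffset θ s p q l') := by
      simp only [floorOffset]; ring
    rw [this]
    exact dvd_sub (dvd_mul_right q _) hdvd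
  exact sub_eq_zero.mp (Int.eq_zero_of_abs_lt_dvd (hpq.symm.dvd_of_dvd_mul_left hdvd') hll')

theorem floorOffset_sub_floorOffset_le (hpq : IsCoprime p q) (hq : 0 < q)
    (happrox : |q * θ - p| ≤ 1 / q) {l l' : ℤ} (hl : l ∈ Finset.Icc 0 (q - 1))
    (hl' : l' ∈ Finset.Icc 0 (q - 1)) :
    floorOffset θ s p q l - floorOffset θ s p q l' ≤ q - 1 := by
  rw [Finset.mem_Icc] at hl hl'
  have hq' : (0 : ℝ) < q := by exact_mod_cast hq
  have hdist : |(l - l' : ℝ)| ≤ q - 1 := by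
    rw [abs_le]; constructor <;> norm_cast <;> omega
  have hdrift : (q * θ - p) * (l - l') < 1 :=
    calc (q * θ - p) * (l - l') ≤ |q * θ - p| * |(l - l' : ℝ)| := by
          rw [← abs_mul]; exact le_abs_self _
      _ ≤ 1 / q * (q - 1) := by gcongr
      _ < 1 := by rw [div_mul_eq_mul_div, one_mul, div_lt_one hq']; linarith
  have hlt : floorOffset θ s p q l - floorOffset θ s p q l' < q + 1 := by
    have := floorOffset_sub_floorOffset_lt (θ := θ) (s := s) (p := p) hq l l'
    have : ((floorOffset θ s p q l - floorOffset θ s p q l' : ℤ) : ℝ) < (q + 1 : ℤ) := by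
      push_cast; linarith
    exact_mod_cast this
  have hne : floorOffset θ s p q l - floorOffset θ s p q l' ≠ q := fun heq => by
    have hdvd : q ∣ floorOffset θ s p q l - floorOffset θ s p q l' := ⟨1, by rw [heq, mul_one]⟩
    obtain rfl := eq_of_dvd_floorOffset_sub hpq hdvd (abs_lt.mpr ⟨by omega, by omega⟩)
    omega
  omega

theorem floor_div_mul_add_eq (hq : 0 < q) {l M : ℤ} (hlo : floorOffset θ s p q l ≤ M)
    (hhi : M - floorOffset θ s p q l ≤ q - 1) :
    ⌊(p / q : ℝ) * l + (M + 1 / 2) / q⌋ = ⌊θ * l + s⌋ := by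
  have hq' : (0 : ℝ) < q := by exact_mod_cast hq
  have hlo' : (floorOffset θ s p q l : ℝ) ≤ M := by exact_mod_cast hlo
  have hhi' : (M - floorOffset θ s p q l : ℝ) ≤ q - 1 := by exact_mod_cast hhi
  have hsplit : (p / q : ℝ) * l + (M + 1 / 2) / q
      = ⌊θ * l + s⌋ + (M - floorOffset θ s p q l + 1 / 2) / q := by
    simp only [floorOffset, Int.cast_sub, Int.cast_mul]
    field_simp
    ring
  rw [hsplit, Int.floor_intCast_add, add_eq_left, Int.floor_eq_zero_iff]
  constructor
  · positivity
  · rw [div_lt_one hq']; linarith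

theorem exists_floor_mul_add_eq_floor_div_mul_add (hpq : IsCoprime p q) (hq : 0 < q)
    (hs : s ∈ Set.Ico 0 1) (happrox : |q * θ - p| ≤ 1 / q) :
    ∃ s' ∈ Set.Ioo (0 : ℝ) 1, ∀ l : ℤ, 0 ≤ l → l ≤ q - 1 →
      ⌊θ * l + s⌋ = ⌊(p / q : ℝ) * l + s'⌋ := by
  have h0 : (0 : ℤ) ∈ Finset.Icc 0 (q - 1) := Finset.mem_Icc.mpr ⟨le_rfl, by omega⟩
  obtain ⟨L, hL, hmax⟩ :=
    Finset.exists_max_image (Finset.Icc 0 (q - 1)) (floorOffset θ s p q) ⟨0, h0⟩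
  set M := floorOffset θ s p q L
  have hM0 : 0 ≤ M := floorOffset_zero (p := p) (q := q) hs ▸ hmax 0 h0
  have hM1 : M ≤ q - 1 := by
    simpa [floorOffset_zero hs] using floorOffset_sub_floorOffset_le (s := s) hpq hq happrox hL h0
  have hq' : (0 : ℝ) < q := by exact_mod_cast hq
  refine ⟨(M + 1 / 2) / q, ⟨by positivity, ?_⟩, fun l hl0 hl1 => ?_⟩
  · rw [div_lt_one hq']
    have : (M : ℝ) ≤ q - 1 := by exact_mod_cast hM1
    linarith
  · have hl : l ∈ Finset.Icc 0 (q - 1) := Finset.mem_Icc.mpr ⟨hl0, hl1⟩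
    exact (floor_div_mul_add_eq hq (hmax l hl)
      (floorOffset_sub_floorOffset_le hpq hq happrox hL hl)).symm

end FloorOffset

open GenContFract

theorem irrational_gaussIter {θ : ℝ} (hθ : Irrational θ) : ∀ n, Irrational (gaussIter θ n)
  | 0 => hθ
  | n + 1 => ((irrational_gaussIter hθ n).sub_intCast _).inv

theorem stream_eq_some_gaussIter {θ : ℝ} (hθ : Irrational θ) :
    ∀ n, IntFractPair.stream θ n = some (IntFractPair.of (gaussIter θ n))
  | 0 => IntFractPair.stream_zero θ
  | n + 1 => IntFractPair.stream_succ_of_some (stream_eq_some_gaussIter hθ n)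
      (Int.fract_pos.mpr ((irrational_gaussIter hθ n).ne_int _)).ne'

theorem of_s_get?_eq_cfA {θ : ℝ} (hθ : Irrational θ) (n : ℕ) :
    (GenContFract.of θ).s.get? n = some ⟨1, cfA θ (n + 1)⟩ :=
  get?_of_eq_some_of_succ_get?_intFractPair_stream (stream_eq_some_gaussIter hθ (n + 1))

theorem conts_of_eq_cfP_cfQ {θ : ℝ} (hθ : Irrational θ) :
    ∀ n, (GenContFract.of θ).conts n = ⟨cfP θ n, cfQ θ n⟩
  | 0 => by simp [zeroth_cont_eq_h_one, of_h_eq_floor, cfP, cfQ, cfA, gaussIter]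
  | 1 => by simp [first_cont_eq (of_s_get?_eq_cfA hθ 0), of_h_eq_floor, cfP, cfQ, cfA, gaussIter]
  | n + 2 => by
    rw [conts_recurrence (of_s_get?_eq_cfA hθ (n + 1)) (conts_of_eq_cfP_cfQ hθ n) (conts_of_eq_cfP_cfQ hθ (n + 1))]
    simp [cfP, cfQ]

theorem not_terminatedAt_of_irrational {θ : ℝ} (hθ : Irrational θ) (n : ℕ) :
    ¬(GenContFract.of θ).TerminatedAt n := by
  simp [terminatedAt_iff_s_none, of_s_get?_eq_cfA hθ n]

theorem dens_of_eq_cfQ {θ : ℝ} (hθ : Irrational θ) (n : ℕ) :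
    (GenContFract.of θ).dens n = cfQ θ n := by
  rw [den_eq_conts_b, conts_of_eq_cfP_cfQ hθ]

theorem nums_of_eq_cfP {θ : ℝ} (hθ : Irrational θ) (n : ℕ) :
    (GenContFract.of θ).nums n = cfP θ n := by
  rw [num_eq_conts_a, conts_of_eq_cfP_cfQ hθ]

theorem one_le_cfQ {θ : ℝ} (hθ : Irrational θ) (n : ℕ) : 1 ≤ cfQ θ n := by
  have h : (GenContFract.of θ).dens 0 ≤ (GenContFract.of θ).dens n :=
    monotone_nat_of_le_succ (f := (GenContFract.of θ).dens) (fun _ => of_den_mono) (Nat.zero_le n)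
  rw [zeroth_den_eq_one, dens_of_eq_cfQ hθ] at h
  exact_mod_cast h

theorem cfQ_le_cfQ_succ {θ : ℝ} (hθ : Irrational θ) (n : ℕ) : cfQ θ n ≤ cfQ θ (n + 1) := by
  have h := of_den_mono (v := θ) (n := n)
  rw [dens_of_eq_cfQ hθ, dens_of_eq_cfQ hθ] at h
  exact_mod_cast h

theorem isCoprime_cfP_cfQ {θ : ℝ} (hθ : Irrational θ) (n : ℕ) : IsCoprime (cfP θ n) (cfQ θ n) := by
  have h := (SimpContFract.of θ).determinant (not_terminatedAt_of_irrational hθ n)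
  simp only [SimpContFract.of] at h
  rw [nums_of_eq_cfP hθ, nums_of_eq_cfP hθ, dens_of_eq_cfQ hθ, dens_of_eq_cfQ hθ] at h
  have hℤ : cfP θ n * cfQ θ (n + 1) - cfQ θ n * cfP θ (n + 1) = (-1) ^ (n + 1) := by
    exact_mod_cast h
  rcases neg_one_pow_eq_or ℤ (n + 1) with hsign | hsign <;> rw [hsign] at hℤ
  · exact ⟨cfQ θ (n + 1), -cfP θ (n + 1), by linear_combination hℤ⟩
  · exact ⟨-cfQ θ (n + 1), cfP θ (n + 1), by linear_combination -hℤ⟩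

theorem abs_cfQ_mul_sub_cfP_le {θ : ℝ} (hθ : Irrational θ) (n : ℕ) :
    |(cfQ θ n : ℝ) * θ - cfP θ n| ≤ 1 / cfQ θ (n + 1) := by
  have h := abs_sub_convs_le (not_terminatedAt_of_irrational hθ n)
  rw [conv_eq_num_div_den, nums_of_eq_cfP hθ, dens_of_eq_cfQ hθ, dens_of_eq_cfQ hθ] at h
  have hq : (0 : ℝ) < cfQ θ n := by exact_mod_cast one_le_cfQ hθ n
  calc |(cfQ θ n : ℝ) * θ - cfP θ n| = cfQ θ n * |θ - cfP θ n / cfQ θ n| := by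
        rw [← abs_of_pos hq, ← abs_mul, abs_of_pos hq, mul_sub, mul_div_cancel₀ _ hq.ne']
    _ ≤ cfQ θ n * (1 / (cfQ θ n * cfQ θ (n + 1))) := by gcongr
    _ = 1 / cfQ θ (n + 1) := by field_simp

theorem no_lattice_point_between_lines_general (θ : ℝ) (hθ : Irrational θ)
    (s : ℝ) (hs : s ∈ Set.Ioo (0 : ℝ) 1) (k : ℕ) :
    ∃ s' ∈ Set.Ioo (0 : ℝ) 1, ∀ l : ℤ, 0 ≤ l → l ≤ cfQ θ k - 1 →
      ⌊θ * (l : ℝ) + s⌋ = ⌊((cfP θ k : ℝ) / (cfQ θ k : ℝ)) * (l : ℝ) + s'⌋ := by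
  have hq : (0 : ℝ) < cfQ θ k := by exact_mod_cast one_le_cfQ hθ k
  have happrox : |(cfQ θ k : ℝ) * θ - cfP θ k| ≤ 1 / cfQ θ k :=
    (abs_cfQ_mul_sub_cfP_le hθ k).trans
      (one_div_le_one_div_of_le hq (by exact_mod_cast cfQ_le_cfQ_succ hθ k))
  exact exists_floor_mul_add_eq_floor_div_mul_add (isCoprime_cfP_cfQ hθ k) (by exact_mod_cast hq)
    (Set.Ioo_subset_Ico_self hs) happrox

/-- Let `θ > 0` be irrational with convergents `p_k/q_k`, let `s ∈ (0,1)`,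
and suppose `k` is even with `1/q_{k+1} < 1 − s`. Then there is `s' ∈ (0,1)` such that for
every integer `0 ≤ l ≤ q_k − 1`, the numbers `θ·l + s` and `(p_k/q_k)·l + s'` have the
same integer part; in particular no integer lattice point lies strictly between the lines
`y = θx + s` and `y = (p_k/q_k)x + s'` over `0 ≤ x ≤ q_k`. -/
theorem no_lattice_point_between_lines (θ : ℝ) (hθ : Irrational θ) (hpos : 0 < θ)
    (s : ℝ) (hs : s ∈ Set.Ioo (0 : ℝ) 1) (k : ℕ) (hk : Even k)
    (hgap : 1 / (cfQ θ (k + 1) : ℝ) < 1 - s) :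
    ∃ s' ∈ Set.Ioo (0 : ℝ) 1, ∀ l : ℤ, 0 ≤ l → l ≤ cfQ θ k - 1 →
      ⌊θ * (l : ℝ) + s⌋ = ⌊((cfP θ k : ℝ) / (cfQ θ k : ℝ)) * (l : ℝ) + s'⌋ :=
  no_lattice_point_between_lines_general θ hθ s hs k
end

section
/- An irrational number r = [c_0; c_1, c_2, ...] is called well-approximated if there is an increasing sequence {k_n} of natural numbers such that for every constant C > 0, exp(C·q_{k_n})/q_{k_n+1} → 0 as n → ∞, where p_k/q_k are the convergents of r. Well-approximated irrational numbers exist; for example, the number obtained by inductively setting c_k = ⌈exp(q_{k-1}²)⌉ is well-approximated. -/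
open Filter Topology

/-- An irrational number `θ` is *well-approximated* if there is an increasing sequence
`k n` of natural numbers such that for every constant `C > 0`,
`exp (C * q (k n)) / q (k n + 1) → 0` as `n → ∞`. -/
def WellApproximated (θ : ℝ) : Prop :=
  Irrational θ ∧ ∃ k : ℕ → ℕ, StrictMono k ∧ ∀ C : ℝ, 0 < C →
    Tendsto (fun n => Real.exp (C * (cfQ θ (k n) : ℝ)) / (cfQ θ (k n + 1) : ℝ))
      atTop (𝓝 0)

/-! The number is assembled from its digits. For integer digits with `a (k + 1) ≥ 2` the finite
tails `[a k; a (k + 1), …, a (k + n)]` converge geometrically to numbers `θ k` with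
`θ k = a k + (θ (k + 1))⁻¹` and `θ (k + 1) ≥ 2`, so the Gauss map steps from tail to tail, reads
off the digits and never stops, which forces irrationality. Feeding the digit rule
`a (k + 1) = ⌈exp (q k ^ 2)⌉` into the denominator recursion gives
`q (k + 1) ≥ exp (q k ^ 2)`, hence `exp (C q k) / q (k + 1) ≤ exp (q k (C - q k)) → 0` along
the full sequence `k n = n`. -/

open GenContFract in
theorem irrational_of_fract_gaussIter_ne_zero {θ : ℝ} (h : ∀ k, Int.fract (gaussIter θ k) ≠ 0) :
    Irrational θ := by
  have hstream : ∀ n, IntFractPair.stream θ n = some (IntFractPair.of (gaussIter θ n)) := by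
    intro n
    induction n with
    | zero => rfl
    | succ n ih => exact IntFractPair.stream_succ_of_some ih (h n)
  rintro ⟨q, rfl⟩
  obtain ⟨n, hn⟩ := (terminates_iff_rat (q : ℝ)).mpr ⟨q, rfl⟩
  have := of_terminatedAt_n_iff_succ_nth_intFractPair_stream_eq_none.mp hn
  rw [hstream] at this
  exact Option.some_ne_none _ this

section Tails

variable (a : ℕ → ℤ)

/-- `[a k; a (k + 1), …, a (k + n)]`. -/
noncomputable def cfTruncTail : ℕ → ℕ → ℝ
  | 0, k => a k
  | n + 1, k => a k + (cfTruncTail n (k + 1))⁻¹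

variable {a}

theorem le_cfTruncTail (ha : ∀ k, 2 ≤ a (k + 1)) (n k : ℕ) : (a k : ℝ) ≤ cfTruncTail a n k := by
  induction n generalizing k with
  | zero => exact le_rfl
  | succ n ih =>
    have h2 : (0 : ℝ) ≤ cfTruncTail a n (k + 1) :=
      le_trans (by exact_mod_cast (two_pos.trans_le (ha k)).le) (ih (k + 1))
    exact le_add_of_nonneg_right (inv_nonneg.mpr h2)

theorem two_le_cfTruncTail (ha : ∀ k, 2 ≤ a (k + 1)) (n k : ℕ) : 2 ≤ cfTruncTail a n (k + 1) :=
  le_trans (by exact_mod_cast ha k) (le_cfTruncTail ha n (k + 1))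

theorem abs_cfTruncTail_succ_sub_le (ha : ∀ k, 2 ≤ a (k + 1)) (n k : ℕ) :
    |cfTruncTail a (n + 1) k - cfTruncTail a n k| ≤ (1 / 4 : ℝ) ^ n := by
  induction n generalizing k with
  | zero =>
    have h2 := two_le_cfTruncTail ha 0 k
    simp only [cfTruncTail, add_sub_cancel_left, pow_zero] at h2 ⊢
    rw [abs_of_pos (by positivity)]
    exact inv_le_one_of_one_le₀ (by linarith)
  | succ n ih =>
    set x := cfTruncTail a (n + 1) (k + 1)
    set y := cfTruncTail a n (k + 1)
    have hx : 2 ≤ x := two_le_cfTruncTail ha (n + 1) k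
    have hy : 2 ≤ y := two_le_cfTruncTail ha n k
    -- the map `t ↦ a k + t⁻¹` contracts by `1 / (x y) ≤ 1 / 4` on `[2, ∞)`
    have hdiff : cfTruncTail a (n + 2) k - cfTruncTail a (n + 1) k = (y - x) / (x * y) := by
      show (a k : ℝ) + x⁻¹ - (a k + y⁻¹) = _
      field_simp
      ring
    rw [hdiff, abs_div, abs_of_pos (mul_pos (by linarith) (by linarith) : 0 < x * y),
      abs_sub_comm]
    calc |x - y| / (x * y) ≤ (1 / 4 : ℝ) ^ n / 4 :=
          div_le_div₀ (by positivity) (ih (k + 1)) (by norm_num) (by nlinarith)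
      _ = (1 / 4 : ℝ) ^ (n + 1) := by ring

theorem cauchySeq_cfTruncTail (ha : ∀ k, 2 ≤ a (k + 1)) (k : ℕ) :
    CauchySeq fun n => cfTruncTail a n k :=
  cauchySeq_of_le_geometric (1 / 4 : ℝ) 1 (by norm_num) fun n => by
    rw [Real.dist_eq, abs_sub_comm, one_mul]
    exact abs_cfTruncTail_succ_sub_le ha n k

variable (a)

/-- The infinite continued fraction `[a k; a (k + 1), …]`. -/
noncomputable def cfTail (k : ℕ) : ℝ := limUnder atTop fun n => cfTruncTail a n k

variable {a}

theorem tendsto_cfTruncTail (ha : ∀ k, 2 ≤ a (k + 1)) (k : ℕ) :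
    Tendsto (fun n => cfTruncTail a n k) atTop (𝓝 (cfTail a k)) :=
  (cauchySeq_cfTruncTail ha k).tendsto_limUnder

theorem two_le_cfTail (ha : ∀ k, 2 ≤ a (k + 1)) (k : ℕ) : 2 ≤ cfTail a (k + 1) :=
  ge_of_tendsto' (tendsto_cfTruncTail ha (k + 1)) fun n => two_le_cfTruncTail ha n k

theorem cfTail_eq (ha : ∀ k, 2 ≤ a (k + 1)) (k : ℕ) :
    cfTail a k = a k + (cfTail a (k + 1))⁻¹ := by
  have hpos : cfTail a (k + 1) ≠ 0 := by linarith [two_le_cfTail ha k]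
  refine tendsto_nhds_unique ((tendsto_cfTruncTail ha k).comp (tendsto_add_atTop_nat 1)) ?_
  exact tendsto_const_nhds.add ((tendsto_cfTruncTail ha (k + 1)).inv₀ hpos)

theorem floor_cfTail (ha : ∀ k, 2 ≤ a (k + 1)) (k : ℕ) : ⌊cfTail a k⌋ = a k := by
  have h2 := two_le_cfTail ha k
  have : (cfTail a (k + 1))⁻¹ < 1 := inv_lt_one_of_one_lt₀ (by linarith)
  have : 0 < (cfTail a (k + 1))⁻¹ := by positivity
  rw [Int.floor_eq_iff, cfTail_eq ha k]
  constructor <;> linarith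

theorem fract_cfTail (ha : ∀ k, 2 ≤ a (k + 1)) (k : ℕ) :
    Int.fract (cfTail a k) = (cfTail a (k + 1))⁻¹ := by
  rw [Int.fract, floor_cfTail ha, cfTail_eq ha k, add_sub_cancel_left]

theorem gaussIter_cfTail (ha : ∀ k, 2 ≤ a (k + 1)) (k : ℕ) :
    gaussIter (cfTail a 0) k = cfTail a k := by
  induction k with
  | zero => rfl
  | succ k ih => rw [gaussIter, ih, fract_cfTail ha, inv_inv]

theorem cfA_cfTail (ha : ∀ k, 2 ≤ a (k + 1)) (k : ℕ) : cfA (cfTail a 0) k = a k := by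
  rw [cfA, gaussIter_cfTail ha, floor_cfTail ha]

theorem irrational_cfTail (ha : ∀ k, 2 ≤ a (k + 1)) : Irrational (cfTail a 0) :=
  irrational_of_fract_gaussIter_ne_zero fun k => by
    rw [gaussIter_cfTail ha, fract_cfTail ha]
    exact inv_ne_zero (by linarith [two_le_cfTail ha k])

end Tails

section FeedbackDigits

variable (f : ℤ → ℤ)

/-- `(q (k - 1), q k)`, with `q (-1) = 0`, for the digits `a 0 = 0`, `a (k + 1) = f (q k)`. -/
def feedbackDenomPair : ℕ → ℤ × ℤ
  | 0 => (0, 1)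
  | k + 1 =>
    ((feedbackDenomPair k).2,
      f (feedbackDenomPair k).2 * (feedbackDenomPair k).2 + (feedbackDenomPair k).1)

def feedbackDenom (k : ℕ) : ℤ := (feedbackDenomPair f k).2

def feedbackDigit : ℕ → ℤ
  | 0 => 0
  | k + 1 => f (feedbackDenom f k)

variable {f}

theorem feedbackDenom_succ_succ (k : ℕ) :
    feedbackDenom f (k + 2) =
      feedbackDigit f (k + 2) * feedbackDenom f (k + 1) + feedbackDenom f k :=
  rfl

theorem feedbackDenomPair_nonneg_one_le (hf : ∀ q, 0 < q → 0 < f q) (k : ℕ) :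
    0 ≤ (feedbackDenomPair f k).1 ∧ 1 ≤ (feedbackDenomPair f k).2 := by
  induction k with
  | zero => exact ⟨le_rfl, le_rfl⟩
  | succ k ih =>
    obtain ⟨h1, h2⟩ := ih
    have := hf _ h2
    exact ⟨by simp only [feedbackDenomPair]; omega, by simp only [feedbackDenomPair]; nlinarith⟩

theorem one_le_feedbackDenom (hf : ∀ q, 0 < q → 0 < f q) (k : ℕ) : 1 ≤ feedbackDenom f k :=
  (feedbackDenomPair_nonneg_one_le hf k).2

theorem feedbackDigit_succ_le_feedbackDenom_succ (hf : ∀ q, 0 < q → 0 < f q) (k : ℕ) :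
    feedbackDigit f (k + 1) ≤ feedbackDenom f (k + 1) := by
  obtain ⟨h1, h2⟩ := feedbackDenomPair_nonneg_one_le hf k
  have := hf _ h2
  show f (feedbackDenomPair f k).2 ≤ f (feedbackDenomPair f k).2 * (feedbackDenomPair f k).2 + _
  nlinarith

theorem two_mul_feedbackDenom_le_succ (hf : ∀ q, 0 < q → 2 ≤ f q) (k : ℕ) :
    2 * feedbackDenom f k ≤ feedbackDenom f (k + 1) := by
  obtain ⟨h1, h2⟩ := feedbackDenomPair_nonneg_one_le (fun q hq => two_pos.trans_le (hf q hq)) k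
  have := hf _ h2
  show 2 * (feedbackDenomPair f k).2 ≤ f (feedbackDenomPair f k).2 * (feedbackDenomPair f k).2 + _
  nlinarith

theorem tendsto_feedbackDenom (hf : ∀ q, 0 < q → 2 ≤ f q) :
    Tendsto (fun k => (feedbackDenom f k : ℝ)) atTop atTop := by
  have hle : ∀ k : ℕ, (k : ℤ) + 1 ≤ feedbackDenom f k := by
    intro k
    induction k with
    | zero => exact le_rfl
    | succ k ih => push_cast; linarith [two_mul_feedbackDenom_le_succ hf k]
  refine tendsto_atTop_mono (fun k => ?_) (tendsto_natCast_atTop_atTop (R := ℝ))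
  exact_mod_cast (Int.le_add_one le_rfl).trans (hle k)

theorem two_le_feedbackDigit (hf : ∀ q, 0 < q → 2 ≤ f q) (k : ℕ) : 2 ≤ feedbackDigit f (k + 1) :=
  hf _ (one_le_feedbackDenom (fun q hq => two_pos.trans_le (hf q hq)) k)

theorem cfQ_cfTail_feedbackDigit (hf : ∀ q, 0 < q → 2 ≤ f q) (k : ℕ) :
    cfQ (cfTail (feedbackDigit f) 0) k = feedbackDenom f k := by
  have hA := cfA_cfTail (two_le_feedbackDigit hf)
  induction k using Nat.twoStepInduction with
  | zero => rfl
  | one => simp [cfQ, hA, feedbackDigit, feedbackDenom, feedbackDenomPair]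
  | more k ih1 ih2 => rw [cfQ, hA, ih1, ih2, feedbackDenom_succ_succ]

end FeedbackDigits

theorem tendsto_exp_mul_div_of_exp_sq_le {x y : ℕ → ℝ} (hx : Tendsto x atTop atTop)
    (hy : ∀ n, Real.exp (x n ^ 2) ≤ y n) (C : ℝ) :
    Tendsto (fun n => Real.exp (C * x n) / y n) atTop (𝓝 0) := by
  have hlim : Tendsto (fun n => Real.exp (x n * (C - x n))) atTop (𝓝 0) :=
    Real.tendsto_exp_atBot.comp
      (hx.atTop_mul_atBot₀ (tendsto_atBot_add_const_left _ C (tendsto_neg_atTop_atBot.comp hx)))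
  refine squeeze_zero (fun n => div_nonneg (Real.exp_pos _).le ((Real.exp_pos _).le.trans (hy n)))
    (fun n => ?_) hlim
  calc Real.exp (C * x n) / y n ≤ Real.exp (C * x n) / Real.exp (x n ^ 2) := by
          gcongr
          exact hy n
      _ = Real.exp (x n * (C - x n)) := by rw [← Real.exp_sub]; ring_nf

theorem two_le_ceil_exp_sq (q : ℤ) (hq : 0 < q) : 2 ≤ ⌈Real.exp ((q : ℝ) ^ 2)⌉ := by
  have : (0 : ℝ) < (q : ℝ) ^ 2 := by positivity
  have := Real.add_one_lt_exp this.ne'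
  rw [Int.le_ceil_iff]
  push_cast
  linarith

/-- Well-approximated irrational numbers exist; for example, the number
obtained by inductively setting `c_k = ⌈exp (q_{k-1}²)⌉` is well-approximated. -/
theorem wellApproximated_exists :
    ∃ θ : ℝ, (∀ k : ℕ, 1 ≤ k → cfA θ k = ⌈Real.exp ((cfQ θ (k - 1) : ℝ) ^ 2)⌉) ∧
      WellApproximated θ := by
  set f : ℤ → ℤ := fun q => ⌈Real.exp ((q : ℝ) ^ 2)⌉
  have hf : ∀ q, 0 < q → 2 ≤ f q := two_le_ceil_exp_sq
  have hQ := cfQ_cfTail_feedbackDigit hf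
  refine ⟨cfTail (feedbackDigit f) 0, fun k hk => ?_,
    irrational_cfTail (two_le_feedbackDigit hf), id, strictMono_id, fun C _ => ?_⟩
  · obtain ⟨k, rfl⟩ := Nat.exists_eq_add_of_le' hk
    rw [cfA_cfTail (two_le_feedbackDigit hf), Nat.add_sub_cancel, hQ]
    rfl
  · simp only [id, hQ]
    refine tendsto_exp_mul_div_of_exp_sq_le (tendsto_feedbackDenom hf) (fun n => ?_) C
    exact (Int.le_ceil _).trans <| Int.cast_le.mpr <|
      feedbackDigit_succ_le_feedbackDenom_succ (fun q hq => two_pos.trans_le (hf q hq)) n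
end

section
/- Suppose r₁ : [0,∞) → ℍ² is a piecewise smooth curve and r₂ a geodesic ray in the hyperbolic plane ℍ², both converging to the same point p on the boundary circle S¹_∞. Let M be a measured geodesic lamination on ℍ². If the total transverse measure I(M, r₁) is finite, then I(M, r₂) is finite; specifically, I(M, r₂) ≤ I(M, r₁) + I(M, r₀), where r₀ is the geodesic segment from r₂(0) to r₁(0). -/
open MeasureTheory Filter Topology
open scoped UpperHalfPlane

noncomputable section

instance : MeasurableSpace (Set ℍ) := ⊤

/-- A measured geodesic lamination on the hyperbolic plane `ℍ²`: a collection of pairwise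
disjoint complete geodesics (ranges of isometric embeddings of `ℝ`), together with a
transverse measure, recorded as a measure on the set of leaves. -/
structure MeasuredGeodesicLamination where
  leaves : Set (Set ℍ)
  geodesic : ∀ L ∈ leaves, ∃ f : ℝ → ℍ, Isometry f ∧ Set.range f = L
  disj : leaves.Pairwise Disjoint
  μ : Measure (Set ℍ)

/-- The total transverse measure `I(M, c)` of the curve `c` restricted to the parameter
set `s`: the measure of the set of leaves of `M` met by `c` on `s`. -/
def MeasuredGeodesicLamination.I (M : MeasuredGeodesicLamination)
    (c : ℝ → ℍ) (s : Set ℝ) : ENNReal :=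
  M.μ {L | L ∈ M.leaves ∧ ∃ t ∈ s, c t ∈ L}



section AuxiliaryGeodesicLemmas
open Real UpperHalfPlane


lemma isomR (f : ℝ → ℝ) (h : ∀ s t : ℝ, |f s - f t| = |s - t|) :
    ∃ σ k : ℝ, (σ = 1 ∨ σ = -1) ∧ ∀ t, f t = σ * t + k := by
  have hsq : ∀ s t : ℝ, (f s - f t)^2 = (s - t)^2 := by
    intro s t; rw [← sq_abs, h, sq_abs]
  have key : ∀ s t : ℝ, (f s - f 0) * (f t - f 0) = s * t := by
    intro s t
    nlinarith [hsq s t, hsq s 0, hsq t 0]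
  have hσ : (f 1 - f 0)^2 = 1 := by nlinarith [key 1 1]
  refine ⟨f 1 - f 0, f 0, ?_, fun t => by
    linear_combination (f 1 - f 0) * key t 1 - (f t - f 0) * hσ⟩
  have : (f 1 - f 0 - 1) * (f 1 - f 0 + 1) = 0 := by nlinarith
  rcases mul_eq_zero.mp this with h | h
  · left; linarith
  · right; linarith


noncomputable def hline (a : ℝ) : ℝ → ℍ := fun t => mk ⟨a, exp t⟩ (exp_pos t)

lemma hline_isometry (a : ℝ) : Isometry (hline a) := isometry_vertical_line a

lemma hline_re (a t : ℝ) : (hline a t).re = a := rfl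
lemma hline_im (a t : ℝ) : (hline a t).im = exp t := rfl

lemma range_hline (a : ℝ) : Set.range (hline a) = {z : ℍ | z.re = a} := by
  ext z
  constructor
  · rintro ⟨t, rfl⟩; rfl
  · intro hz
    refine ⟨log z.im, ?_⟩
    apply UpperHalfPlane.ext
    apply Complex.ext
    · exact hz.symm ▸ rfl
    · show exp (log z.im) = z.im
      exact exp_log z.im_pos

noncomputable def hcirc (c ρ : ℝ) (hρ : 0 < ρ) : ℝ → ℍ := fun t =>
  mk ⟨c + ρ * (exp t ^ 2 - 1) / (exp t ^ 2 + 1), 2 * ρ * exp t / (exp t ^ 2 + 1)⟩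
    (by positivity)

lemma hcirc_re (c ρ : ℝ) (hρ : 0 < ρ) (t : ℝ) :
    (hcirc c ρ hρ t).re = c + ρ * (exp t ^ 2 - 1) / (exp t ^ 2 + 1) := rfl
lemma hcirc_im (c ρ : ℝ) (hρ : 0 < ρ) (t : ℝ) :
    (hcirc c ρ hρ t).im = 2 * ρ * exp t / (exp t ^ 2 + 1) := rfl

lemma sinh_sq_half (x : ℝ) : sinh (x / 2) ^ 2 = (cosh x - 1) / 2 := by
  have := Real.cosh_two_mul (x / 2)
  have h2 : 2 * (x / 2) = x := by ring
  rw [h2] at this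
  have := Real.cosh_sq (x / 2)
  nlinarith [Real.cosh_two_mul (x/2), Real.cosh_sq (x/2)]

lemma hcirc_isometry (c ρ : ℝ) (hρ : 0 < ρ) : Isometry (hcirc c ρ hρ) := by
  apply Isometry.of_dist_eq
  intro s t
  have habs : dist s t = |s - t| := Real.dist_eq s t
  rw [habs, UpperHalfPlane.dist_eq_iff_eq_sq_sinh (abs_nonneg _)]
  have h1 : sinh (|s - t| / 2) ^ 2 = (cosh (s - t) - 1) / 2 := by
    rcases abs_choice (s - t) with h | h
    · rw [h, sinh_sq_half]
    · rw [h]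
      have : sinh (-(s-t)/2) ^ 2 = sinh ((s-t)/2)^2 := by
        rw [show -(s-t)/2 = -((s-t)/2) by ring, Real.sinh_neg]; ring
      rw [this, sinh_sq_half]
  rw [h1]
  have hes := exp_pos s
  have het := exp_pos t
  have hds : dist ((hcirc c ρ hρ s : ℂ)) ((hcirc c ρ hρ t : ℂ)) ^ 2
      = ((hcirc c ρ hρ s).re - (hcirc c ρ hρ t).re) ^ 2
        + ((hcirc c ρ hρ s).im - (hcirc c ρ hρ t).im) ^ 2 := by
    rw [Complex.dist_eq_re_im, sq_sqrt (by positivity)]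
    rfl
  rw [hds]; simp only [hcirc_re, hcirc_im]
  rw [Real.cosh_eq, show -(s-t) = t - s by ring, exp_sub, exp_sub]
  have h4 : exp s ^ 2 + 1 > 0 := by positivity
  have h5 : exp t ^ 2 + 1 > 0 := by positivity
  field_simp
  ring

lemma range_hcirc (c ρ : ℝ) (hρ : 0 < ρ) :
    Set.range (hcirc c ρ hρ) = {z : ℍ | (z.re - c)^2 + z.im^2 = ρ^2} := by
  ext z
  constructor
  · rintro ⟨t, rfl⟩
    have h : exp t ^ 2 + 1 > 0 := by positivity
    simp only [Set.mem_setOf_eq, hcirc_re, hcirc_im]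
    field_simp
    ring
  · intro hz
    set x := z.re with hx
    set y := z.im with hyy
    have hy : 0 < y := z.im_pos
    have hz : (x - c)^2 + y^2 = ρ^2 := hz
    have hlt : (x - c)^2 < ρ^2 := by nlinarith
    have hpos : 0 < ρ + (x - c) := by nlinarith [sq_nonneg (x - c + ρ)]
    set E := (ρ + (x - c)) / y with hE
    have hEpos : 0 < E := by positivity
    refine ⟨log E, ?_⟩
    have hexp : exp (log E) = E := exp_log hEpos
    apply UpperHalfPlane.ext
    have hden : E ^ 2 + 1 = 2 * ρ * (ρ + (x - c)) / y^2 := by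
      rw [hE]; field_simp; nlinarith
    apply Complex.ext
    · show c + ρ * (exp (log E) ^ 2 - 1) / (exp (log E) ^ 2 + 1) = x
      rw [hexp]
      have hnum : E ^ 2 - 1 = 2 * (x - c) * (ρ + (x - c)) / y^2 := by
        rw [hE]; field_simp; nlinarith
      rw [hnum, hden]
      field_simp
      ring
    · show 2 * ρ * exp (log E) / (exp (log E) ^ 2 + 1) = y
      rw [hexp, hden, hE]
      field_simp

lemma param (f h : ℝ → ℍ) (hf : Isometry f) (hh : Isometry h)
    (hsub : Set.range f ⊆ Set.range h) :
    ∃ σ k : ℝ, (σ = 1 ∨ σ = -1) ∧ (∀ t, f t = h (σ * t + k)) ∧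
      Set.range f = Set.range h := by
  have hch : ∀ t : ℝ, ∃ s, h s = f t := fun t => hsub ⟨t, rfl⟩
  choose ψ hψ using hch
  have hiso : ∀ s t : ℝ, |ψ s - ψ t| = |s - t| := by
    intro s t
    have : dist (h (ψ s)) (h (ψ t)) = dist (f s) (f t) := by rw [hψ, hψ]
    rw [hh.dist_eq, hf.dist_eq] at this
    simpa [Real.dist_eq] using this
  obtain ⟨σ, k, hσ, hform⟩ := isomR ψ hiso
  refine ⟨σ, k, hσ, fun t => by rw [← hψ t, hform t], ?_⟩
  apply Set.Subset.antisymm hsub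
  rintro _ ⟨s, rfl⟩
  have hσσ : σ * σ = 1 := by rcases hσ with h | h <;> rw [h] <;> ring
  refine ⟨σ * (s - k), ?_⟩
  rw [← hψ, hform]
  congr 1
  linear_combination (s - k) * hσσ

lemma CLASS (f : ℝ → ℍ) (hf : Isometry f) :
    (∃ a : ℝ, Set.range f = Set.range (hline a)) ∨
    (∃ c ρ : ℝ, ∃ hρ : 0 < ρ, Set.range f = Set.range (hcirc c ρ hρ)) := by
  set x : ℝ → ℝ := fun t => (f t).re with hxdef
  set y : ℝ → ℝ := fun t => (f t).im with hydef
  have hy : ∀ t, 0 < y t := fun t => (f t).im_pos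
  set a : ℝ → ℝ := fun t => y t * exp t with hadef
  set b : ℝ → ℝ := fun t => y t * exp (-t) with hbdef
  have hstar : ∀ s t : ℝ, (x s - x t)^2 = -((a s - a t) * (b s - b t)) := by
    intro s t
    have hd := hf.dist_eq s t
    have hc := UpperHalfPlane.cosh_dist (f s) (f t)
    rw [hd, Real.dist_eq, Real.cosh_abs] at hc
    have hd2 : dist ((f s : ℂ)) ((f t : ℂ)) ^ 2 = (x s - x t)^2 + (y s - y t)^2 := by
      rw [Complex.dist_eq_re_im, sq_sqrt (by positivity)]
      rfl
    rw [hd2, Real.cosh_eq] at hc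
    have he1 : exp (s - t) = exp s / exp t := exp_sub s t
    have he2 : exp (-(s - t)) = exp t / exp s := by rw [show -(s-t) = t - s by ring, exp_sub]
    rw [he1, he2] at hc
    have hys := hy s; have hyt := hy t
    have hes := exp_pos s; have het := exp_pos t
    have hesne : exp s ≠ 0 := ne_of_gt hes
    have hetne : exp t ≠ 0 := ne_of_gt het
    simp only [hadef, hbdef, exp_neg]
    field_simp at hc ⊢
    nlinarith [hc, mul_pos hes het]
  -- differences from base point 0
  set X : ℝ → ℝ := fun t => x t - x 0 with hXdef
  set A : ℝ → ℝ := fun t => a t - a 0 with hAdef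
  set B : ℝ → ℝ := fun t => b t - b 0 with hBdef
  have hX2 : ∀ t, X t ^ 2 = -(A t * B t) := by
    intro t; simpa [hXdef, hAdef, hBdef, sq] using hstar t 0
  have hXX : ∀ s t : ℝ, X s * X t = -((A s * B t + A t * B s)/2) := by
    intro s t
    simp only [hXdef, hAdef, hBdef]
    linear_combination (-(1:ℝ)/2) * hstar s t + (1/2) * hstar s 0 + (1/2) * hstar t 0
  have hcross : ∀ s t : ℝ, A s * B t = A t * B s := by
    intro s t
    have h0 : (A s * B t - A t * B s)^2 = 0 := by
      linear_combination (2*(A s * B t + A t * B s) - 4*(X s * X t)) * hXX s t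
        + (-4*(A t * B t)) * hX2 s + (4*(X s)^2) * hX2 t
    have := pow_eq_zero_iff (n := 2) (by norm_num) |>.mp h0
    linarith [this]
  have hne : ¬ (A 1 = 0 ∧ B 1 = 0) := by
    rintro ⟨hA1, hB1⟩
    have ha1 : a 1 = a 0 := by simpa [hAdef, sub_eq_zero] using hA1
    have hb1 : b 1 = b 0 := by simpa [hBdef, sub_eq_zero] using hB1
    simp only [hadef, hbdef, neg_zero, exp_zero, mul_one] at ha1 hb1
    have h1 := hy 1
    have he : exp (1:ℝ) > 1 := by
      have := Real.exp_one_gt_d9; linarith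
    have he' : exp (-1:ℝ) < 1 := by
      have := Real.exp_lt_exp.mpr (show (-1:ℝ) < 0 by norm_num)
      rwa [Real.exp_zero] at this
    nlinarith [ha1, hb1, h1, he, he']
  have vertical : (∀ t, x t = x 0) →
      ∃ a : ℝ, Set.range f = Set.range (hline a) := by
    intro hxc
    obtain ⟨σ, k, _, _, hre⟩ := param f (hline (x 0)) hf (hline_isometry _) (by
      rintro _ ⟨t, rfl⟩
      rw [range_hline]
      exact hxc t)
    exact ⟨x 0, hre⟩
  by_cases hA1 : A 1 = 0
  · have hB1 : B 1 ≠ 0 := fun h => hne ⟨hA1, h⟩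
    left
    apply vertical
    intro t
    have hAz : A t = 0 := by
      have := hcross t 1
      rw [hA1] at this
      simp only [zero_mul] at this
      exact (mul_eq_zero.mp this).resolve_right hB1
    have h2 := hX2 t
    rw [hAz] at h2
    simp only [zero_mul, neg_zero] at h2
    have := pow_eq_zero_iff (n:=2) (by norm_num) |>.mp h2
    simpa [hXdef, sub_eq_zero] using this
  · by_cases hB1 : B 1 = 0
    · left
      apply vertical
      intro t
      have hBz : B t = 0 := by
        have := hcross 1 t
        rw [hB1] at this
        simp only [mul_zero] at this
        exact (mul_eq_zero.mp this).resolve_left hA1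
      have h2 := hX2 t
      rw [hBz] at h2
      simp only [mul_zero, neg_zero] at h2
      have := pow_eq_zero_iff (n:=2) (by norm_num) |>.mp h2
      simpa [hXdef, sub_eq_zero] using this
    · -- circle case
      have hX1 : X 1 ≠ 0 := by
        intro h
        have h2 := hX2 1
        rw [h] at h2
        have : A 1 * B 1 = 0 := by nlinarith [h2]
        rcases mul_eq_zero.mp this with h' | h' <;> [exact hA1 h'; exact hB1 h']
      set lam : ℝ → ℝ := fun t => A t / A 1 with hlamdef
      have hAt : ∀ t, A t = lam t * A 1 := by
        intro t; rw [hlamdef]; field_simp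
      have hBt : ∀ t, B t = lam t * B 1 := by
        intro t
        rw [hlamdef, div_mul_eq_mul_div, eq_div_iff hA1]
        linear_combination -hcross t 1
      have hXt : ∀ t, X t = lam t * X 1 := by
        intro t
        have h1 := hXX t 1
        rw [hAt t, hBt t] at h1
        have h2 := hX2 1
        have h3 : X t * X 1 = lam t * X 1 * X 1 := by
          linear_combination h1 - lam t * h2
        exact mul_right_cancel₀ hX1 h3
      set K : ℝ := (a 0 * B 1 + b 0 * A 1) / X 1 with hKdef
      set c : ℝ := x 0 + K / 2 with hcdef
      have hmix : exp (0:ℝ) * exp (-0:ℝ) = 1 := by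
        rw [← exp_add]; norm_num
      have hρpos : 0 < Real.sqrt (y 0 ^ 2 + K ^ 2 / 4) := by
        apply Real.sqrt_pos.mpr
        nlinarith [hy 0, sq_nonneg K]
      have hρsq : Real.sqrt (y 0 ^ 2 + K ^ 2 / 4) ^ 2 = y 0 ^ 2 + K ^ 2 / 4 := by
        apply Real.sq_sqrt
        nlinarith [hy 0, sq_nonneg K]
      have hcirceq : ∀ t, (x t - c)^2 + y t ^2 = y 0 ^ 2 + K ^ 2 / 4 := by
        intro t
        have hmixt : exp t * exp (-t) = 1 := by
          rw [← exp_add]; norm_num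
        have hyab : y t ^ 2 = a t * b t := by
          simp only [hadef, hbdef]
          linear_combination (-(y t ^ 2)) * hmixt
        have hy0ab : y 0 ^ 2 = a 0 * b 0 := by
          simp only [hadef, hbdef]
          linear_combination (-(y 0 ^ 2)) * hmix
        have hab : a t = a 0 + lam t * A 1 := by
          have h := hAt t
          simp only [hAdef] at h ⊢
          linarith
        have hbb : b t = b 0 + lam t * B 1 := by
          have h := hBt t
          simp only [hBdef] at h ⊢
          linarith
        have hxx : x t = x 0 + lam t * X 1 := by
          have h := hXt t
          simp only [hXdef] at h ⊢
          linarith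
        have hX1sq : X 1 ^ 2 = -(A 1 * B 1) := hX2 1
        have hKX : K * X 1 = a 0 * B 1 + b 0 * A 1 := by
          rw [hKdef]; field_simp
        rw [hcdef, hxx, hyab, hab, hbb]
        linear_combination (lam t)^2 * hX1sq - (lam t) * hKX - hy0ab
      right
      obtain ⟨σ, k, _, _, hre⟩ := param f (hcirc c _ hρpos) hf (hcirc_isometry _ _ hρpos) (by
        rintro _ ⟨t, rfl⟩
        rw [range_hcirc]
        show (x t - c)^2 + y t ^2 = _
        rw [hcirceq t, hρsq])
      exact ⟨c, _, hρpos, hre⟩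


lemma mono_contra (ψ : ℝ → ℝ) (hm : Monotone ψ) (t₀ : ℝ) (ht₀ : 0 ≤ t₀)
    (hz : ψ t₀ = 0) (δ : ℝ) (hδ : Tendsto ψ atTop (𝓝 δ)) (hs : 0 < ψ 0 * δ) : False := by
  have h0 : ψ 0 ≤ 0 := by have := hm ht₀; rwa [hz] at this
  have hψ0 : ψ 0 < 0 := by
    rcases lt_or_eq_of_le h0 with h | h
    · exact h
    · rw [h] at hs; simp at hs
  have hδneg : δ < 0 := by nlinarith
  have : (0:ℝ) ≤ δ := by
    apply ge_of_tendsto hδ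
    filter_upwards [eventually_ge_atTop t₀] with t ht
    calc (0:ℝ) = ψ t₀ := hz.symm
    _ ≤ ψ t := hm ht
  linarith

lemma anti_contra (ψ : ℝ → ℝ) (hm : Antitone ψ) (t₀ : ℝ) (ht₀ : 0 ≤ t₀)
    (hz : ψ t₀ = 0) (δ : ℝ) (hδ : Tendsto ψ atTop (𝓝 δ)) (hs : 0 < ψ 0 * δ) : False := by
  apply mono_contra (fun t => -ψ t) (fun s t hst => neg_le_neg (hm hst)) t₀ ht₀
    (by simp [hz]) (-δ) (hδ.neg) (by simpa using hs)

lemma no_zero_sign (ψ : ℝ → ℝ) (a b : ℝ) (hab : a ≤ b) (hc : ContinuousOn ψ (Set.Icc a b))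
    (hz : ∀ t ∈ Set.Icc a b, ψ t ≠ 0) : 0 < ψ a * ψ b := by
  have ha := hz a ⟨le_refl a, hab⟩
  have hb := hz b ⟨hab, le_refl b⟩
  rcases lt_or_gt_of_ne ha with ha' | ha' <;> rcases lt_or_gt_of_ne hb with hb' | hb'
  · nlinarith
  · exfalso
    obtain ⟨t, ht, hψ⟩ := intermediate_value_Icc hab hc (show (0:ℝ) ∈ Set.Icc (ψ a) (ψ b) from ⟨le_of_lt ha', le_of_lt hb'⟩)
    exact hz t ht hψ
  · exfalso
    obtain ⟨t, ht, hψ⟩ := intermediate_value_Icc' hab hc (show (0:ℝ) ∈ Set.Icc (ψ b) (ψ a) from ⟨le_of_lt hb', le_of_lt ha'⟩)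
    exact hz t ht hψ
  · nlinarith

lemma sign_transfer {aa bb cc : ℝ} (h1 : 0 < aa * bb) (h2 : 0 < bb * cc) : 0 < aa * cc := by
  nlinarith [mul_pos h1 h2, sq_nonneg bb]

lemma mfun_le {E1 E2 : ℝ} (h : E1 ≤ E2) :
    (E1^2 - 1)/(E1^2 + 1) ≤ (E2^2 - 1)/(E2^2 + 1) ∨ True := by
  right; trivial


lemma onePoint_infty_norm {u : ℝ → ℍ}
    (h : Tendsto (fun t => ((u t : ℂ) : OnePoint ℂ)) atTop (𝓝 (OnePoint.infty))) :
    Tendsto (fun t => ‖(u t : ℂ)‖) atTop atTop := by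
  have h2 : Tendsto (fun t => (u t : ℂ)) atTop (Filter.coclosedCompact ℂ) := by
    rw [← OnePoint.comap_coe_nhds_infty, tendsto_comap_iff]
    exact h
  rw [Filter.coclosedCompact_eq_cocompact] at h2
  exact tendsto_norm_cocompact_atTop.comp h2

lemma onePoint_coe_tendsto {u : ℝ → ℍ} {x : ℂ}
    (h : Tendsto (fun t => ((u t : ℂ) : OnePoint ℂ)) atTop (𝓝 ((x : OnePoint ℂ)))) :
    Tendsto (fun t => (u t : ℂ)) atTop (𝓝 x) := by
  exact (OnePoint.isOpenEmbedding_coe.isEmbedding.tendsto_nhds_iff).mpr h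

-- further small helpers
lemma mdiv_le {E1 E2 : ℝ} (h0 : 0 ≤ E1) (h : E1 ≤ E2) :
    (E1^2 - 1)/(E1^2 + 1) ≤ (E2^2 - 1)/(E2^2 + 1) := by
  rw [div_le_div_iff₀ (by positivity) (by positivity)]
  nlinarith

lemma mdiv_mem {E : ℝ} (h0 : 0 < E) : -1 < (E^2-1)/(E^2+1) ∧ (E^2-1)/(E^2+1) < 1 := by
  constructor
  · rw [show (-1 : ℝ) = (-(E^2+1))/(E^2+1) by field_simp, div_lt_div_iff₀ (by positivity) (by positivity)]
    nlinarith
  · rw [div_lt_one (by positivity)]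
    nlinarith

lemma limit_sign {uu δ : ℝ} (w : ℝ → ℝ) (hsign : ∀ t, 0 ≤ t → 0 < uu * w t)
    (hlim : Tendsto w atTop (𝓝 δ)) (hδ : δ ≠ 0) : 0 < uu * δ := by
  have hev : ∀ᶠ t in atTop, |w t - δ| < |δ|/2 := by
    have := Metric.tendsto_nhds.mp hlim (|δ|/2) (by positivity)
    simpa [Real.dist_eq] using this
  obtain ⟨t, ht⟩ := (hev.and (eventually_ge_atTop 0)).exists
  have h1 := hsign t ht.2
  have h2 := abs_lt.mp ht.1
  rcases lt_or_gt_of_ne hδ with h | h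
  · rw [abs_of_neg h] at h2
    nlinarith
  · rw [abs_of_pos h] at h2
    nlinarith

lemma path_sign (φ : ℍ → ℝ) (hφc : Continuous φ) (r₀ r₁ g₂ : ℝ → ℍ)
    (hr₀ : Continuous r₀) (hr₁ : Continuous r₁) (T : ℝ) (hT : 0 ≤ T)
    (h00 : r₀ 0 = g₂ 0) (h0T : r₀ T = r₁ 0)
    (hno0 : ∀ t ∈ Set.Icc 0 T, φ (r₀ t) ≠ 0) (hno1 : ∀ t, 0 ≤ t → φ (r₁ t) ≠ 0) :
    ∀ t, 0 ≤ t → 0 < φ (g₂ 0) * φ (r₁ t) := by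
  intro t ht
  have s1 : 0 < φ (r₀ 0) * φ (r₀ T) :=
    no_zero_sign (fun s => φ (r₀ s)) 0 T hT ((hφc.comp hr₀).continuousOn) hno0
  have s2 : 0 < φ (r₁ 0) * φ (r₁ t) :=
    no_zero_sign (fun s => φ (r₁ s)) 0 t ht ((hφc.comp hr₁).continuousOn)
      (fun s hs => hno1 s hs.1)
  rw [h00, h0T] at s1
  exact sign_transfer s1 s2

lemma circ_norm (z : ℍ) (c : ℝ) : ‖(z : ℂ) - (c : ℂ)‖^2 = (z.re - c)^2 + z.im^2 := by
  rw [← Complex.normSq_eq_norm_sq]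
  simp [Complex.normSq_apply, Complex.sub_re, Complex.sub_im, UpperHalfPlane.coe_re,
    UpperHalfPlane.coe_im]
  ring

lemma mdiv_tendsto_top : Tendsto (fun E : ℝ => (E^2 - 1)/(E^2 + 1)) atTop (𝓝 1) := by
  have h1 : Tendsto (fun E : ℝ => E^2 + 1) atTop atTop :=
    tendsto_atTop_add_const_right _ 1 (tendsto_pow_atTop two_ne_zero)
  have h2 : Tendsto (fun E : ℝ => 2/(E^2+1)) atTop (𝓝 0) :=
    tendsto_const_nhds.div_atTop h1
  have h3 := (tendsto_const_nhds (x := (1:ℝ)) (f := atTop)).sub h2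
  rw [sub_zero] at h3
  apply h3.congr'
  filter_upwards [eventually_ge_atTop (1:ℝ)] with E hE
  have : E^2 + 1 > 0 := by positivity
  field_simp
  ring

lemma exp_shift_top (k : ℝ) : Tendsto (fun t : ℝ => exp (t + k)) atTop atTop :=
  Real.tendsto_exp_atTop.comp (tendsto_atTop_add_const_right _ k tendsto_id)

lemma exp_shift_zero (k : ℝ) : Tendsto (fun t : ℝ => exp (-t + k)) atTop (𝓝 0) :=
  Real.tendsto_exp_atBot.comp (tendsto_atBot_add_const_right _ k tendsto_neg_atTop_atBot)

lemma mdiv_comp_top (k : ℝ) :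
    Tendsto (fun t : ℝ => (exp (t+k)^2 - 1)/(exp (t+k)^2 + 1)) atTop (𝓝 1) :=
  mdiv_tendsto_top.comp (exp_shift_top k)

lemma mdiv_comp_bot (k : ℝ) :
    Tendsto (fun t : ℝ => (exp (-t+k)^2 - 1)/(exp (-t+k)^2 + 1)) atTop (𝓝 (-1)) := by
  have hc : ContinuousAt (fun E : ℝ => (E^2 - 1)/(E^2 + 1)) 0 := by
    apply ContinuousAt.div
    · fun_prop
    · fun_prop
    · norm_num
  have := hc.tendsto.comp (exp_shift_zero k)
  simp only [Function.comp_def] at this ⊢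
  convert this using 2
  norm_num

lemma bdd_contra (u : ℝ → ℍ) (hng : Tendsto (fun t => ‖(u t : ℂ)‖) atTop atTop)
    (Cb : ℝ) (hC : ∀ t, 0 ≤ t → ‖(u t : ℂ)‖ ≤ Cb) : False := by
  obtain ⟨t, ht⟩ := ((hng.eventually_gt_atTop Cb).and (eventually_ge_atTop 0)).exists
  have := hC t ht.2
  linarith [ht.1]

lemma tend_re_im {u : ℝ → ℍ} {x : ℝ} (h : Tendsto (fun t => (u t : ℂ)) atTop (𝓝 ((x:ℂ)))) :
    Tendsto (fun t => (u t).re) atTop (𝓝 x) ∧ Tendsto (fun t => (u t).im) atTop (𝓝 0) := by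
  constructor
  · have := (Complex.continuous_re.tendsto _).comp h
    simpa [Function.comp_def] using this
  · have := (Complex.continuous_im.tendsto _).comp h
    simpa [Function.comp_def] using this

lemma tend_phi (c ρ x : ℝ) (u : ℝ → ℍ) (hre : Tendsto (fun t => (u t).re) atTop (𝓝 x))
    (him : Tendsto (fun t => (u t).im) atTop (𝓝 0)) :
    Tendsto (fun t => ((u t).re - c)^2 + (u t).im^2 - ρ^2) atTop (𝓝 ((x-c)^2 - ρ^2)) := by
  have h1 := (((hre.sub (tendsto_const_nhds (x := c))).pow 2).add ((him).pow 2)).sub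
    (tendsto_const_nhds (x := ρ^2))
  convert h1 using 2
  norm_num

set_option maxHeartbeats 1000000 in
lemma core (r₁ : ℝ → ℍ) (hr₁ : Continuous r₁)
    (g₂ : ℝ → ℍ) (hg₂ : Isometry g₂)
    (p : OnePoint ℂ) (hp : p = OnePoint.infty ∨ ∃ x : ℝ, p = ((x : ℂ) : OnePoint ℂ))
    (h₁ : Tendsto (fun t : ℝ => ((r₁ t : ℂ) : OnePoint ℂ)) atTop (𝓝 p))
    (h₂ : Tendsto (fun t : ℝ => ((g₂ t : ℂ) : OnePoint ℂ)) atTop (𝓝 p))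
    (r₀ : ℝ → ℍ) (T : ℝ) (hT : 0 ≤ T) (hr₀ : Isometry r₀)
    (h00 : r₀ 0 = g₂ 0) (h0T : r₀ T = r₁ 0)
    (L : Set ℍ) (f : ℝ → ℍ) (hfiso : Isometry f) (hrange : Set.range f = L)
    (t₀ : ℝ) (ht₀ : 0 ≤ t₀) (hmemL : g₂ t₀ ∈ L)
    (hno1 : ∀ t, 0 ≤ t → r₁ t ∉ L) (hno0 : ∀ t, t ∈ Set.Icc 0 T → r₀ t ∉ L) : False := by
  have h0mem : (0:ℝ) ∈ Set.Icc 0 T := ⟨le_refl 0, hT⟩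
  have hstart : g₂ 0 ∉ L := h00 ▸ hno0 0 h0mem
  have hclassL := CLASS f hfiso
  rw [hrange] at hclassL
  rcases CLASS g₂ hg₂ with ⟨b, hG⟩ | ⟨c', ρ', hρ', hG⟩
  · -- g₂ is a vertical line
    obtain ⟨σ, k, hσ, hgt, -⟩ := param g₂ (hline b) hg₂ (hline_isometry b) hG.le
    have hgre : ∀ t, (g₂ t).re = b := fun t => by rw [hgt t]; rfl
    have hgim : ∀ t, (g₂ t).im = exp (σ * t + k) := fun t => by rw [hgt t]; rfl
    rcases hclassL with ⟨α, hL⟩ | ⟨c, ρ, hρ, hL⟩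
    · -- L vertical too
      have hα : α = b := by
        have hm2 := hmemL
        rw [hL, range_hline] at hm2
        rw [← hm2]
        exact hgre t₀
      apply hstart
      rw [hL, range_hline]
      show (g₂ 0).re = α
      rw [hgre 0, hα]
    · -- L circle
      set φ : ℍ → ℝ := fun z => (z.re - c)^2 + z.im^2 - ρ^2 with hφ
      have hφc : Continuous φ := by
        apply Continuous.sub ?_ continuous_const
        exact ((UpperHalfPlane.continuous_re.sub continuous_const).pow 2).add
          (UpperHalfPlane.continuous_im.pow 2)
      have hmemiff : ∀ z : ℍ, z ∈ L ↔ φ z = 0 := by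
        intro z
        rw [hL, range_hcirc]
        simp only [Set.mem_setOf_eq, hφ, sub_eq_zero]
      have hsign := path_sign φ hφc r₀ r₁ g₂ hr₀.continuous hr₁ T hT h00 h0T
        (fun t ht hzz => hno0 t ht ((hmemiff _).mpr hzz))
        (fun t ht hzz => hno1 t ht ((hmemiff _).mpr hzz))
      have hzero : φ (g₂ t₀) = 0 := (hmemiff _).mp hmemL
      have hφg : ∀ t, φ (g₂ t) = (b - c)^2 + exp (σ * t + k)^2 - ρ^2 := by
        intro t
        simp only [hφ, hgre, hgim]
      rcases hp with hpi | ⟨x, hpx⟩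
      · -- p = ∞
        have hn1 : Tendsto (fun t => ‖(r₁ t : ℂ)‖) atTop atTop :=
          onePoint_infty_norm (hpi ▸ h₁)
        have hng : Tendsto (fun t => ‖(g₂ t : ℂ)‖) atTop atTop :=
          onePoint_infty_norm (hpi ▸ h₂)
        have hσ1 : σ = 1 := by
          rcases hσ with h | h
          · exact h
          · exfalso
            apply bdd_contra g₂ hng (|b| + exp k)
            intro t ht
            have h1 : ‖(g₂ t : ℂ)‖ ≤ |(g₂ t).re| + |(g₂ t).im| := by
              exact Complex.norm_le_abs_re_add_abs_im _
            have h2 : (g₂ t).im = exp (-t + k) := by rw [hgim t, h]; ring_nf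
            have h3 : exp (-t + k) ≤ exp k := exp_le_exp.mpr (by linarith)
            have h4 : |(g₂ t).im| = (g₂ t).im := abs_of_pos (g₂ t).im_pos
            rw [hgre t] at h1
            rw [h4, h2] at h1
            linarith
        -- find a point where φ (r₁ t) > 0
        obtain ⟨t₁, ht₁⟩ := ((hn1.eventually_gt_atTop (|c| + ρ)).and (eventually_ge_atTop 0)).exists
        have hpos1 : 0 < φ (r₁ t₁) := by
          have hc1 : ‖(r₁ t₁ : ℂ)‖ - ‖((c:ℝ) : ℂ)‖ ≤ ‖(r₁ t₁ : ℂ) - (c : ℂ)‖ :=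
            norm_sub_norm_le _ _
          have hc2 : ‖((c:ℝ) : ℂ)‖ = |c| := by
            rw [Complex.norm_real, Real.norm_eq_abs]
          have hc3 := circ_norm (r₁ t₁) c
          have hc4 : |c| + ρ < ‖(r₁ t₁ : ℂ)‖ := ht₁.1
          simp only [hφ]
          nlinarith [norm_nonneg ((r₁ t₁ : ℂ) - (c : ℂ))]
        have hu : 0 < φ (g₂ 0) := by nlinarith [hsign t₁ ht₁.2]
        have he1 : exp (σ * 0 + k) ≤ exp (σ * t₀ + k) :=
          exp_le_exp.mpr (by rw [hσ1]; simp; linarith)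
        nlinarith [hφg t₀, hφg 0, hzero, hu, exp_pos (σ * 0 + k), exp_pos (σ * t₀ + k)]
      · -- p = x real
        have hc1 : Tendsto (fun t => (r₁ t : ℂ)) atTop (𝓝 (x:ℂ)) :=
          onePoint_coe_tendsto (hpx ▸ h₁)
        have hcg : Tendsto (fun t => (g₂ t : ℂ)) atTop (𝓝 (x:ℂ)) :=
          onePoint_coe_tendsto (hpx ▸ h₂)
        obtain ⟨hre1, him1⟩ := tend_re_im hc1
        obtain ⟨hreg, himg⟩ := tend_re_im hcg
        have hbx : b = x :=
          (tendsto_nhds_unique (hreg.congr hgre) tendsto_const_nhds).symm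
        have hσm : σ = -1 := by
          rcases hσ with h | h
          · exfalso
            have hA : Tendsto (fun t => (g₂ t).im) atTop atTop := by
              apply (exp_shift_top k).congr
              intro t
              rw [hgim t, h, one_mul]
            obtain ⟨t, ht⟩ := ((hA.eventually_gt_atTop 1).and
              (himg.eventually (eventually_lt_nhds (by norm_num : (0:ℝ) < 1)))).exists
            exact absurd ht.2 (not_lt.mpr ht.1.le)
          · exact h
        -- ψ along g₂ is antitone with limit δ < 0
        set δ : ℝ := (x - c)^2 - ρ^2 with hδ
        have hψeq : ∀ t, φ (g₂ t) = (x - c)^2 + exp (-t + k)^2 - ρ^2 := by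
          intro t
          rw [hφg t, hσm, hbx]
          ring_nf
        have hδneg : δ < 0 := by
          have h5 := hψeq t₀
          rw [hzero] at h5
          rw [hδ]
          nlinarith [exp_pos (-t₀ + k)]
        have hlim1 : Tendsto (fun t => φ (r₁ t)) atTop (𝓝 δ) := tend_phi c ρ x r₁ hre1 him1
        have husign : 0 < φ (g₂ 0) * δ :=
          limit_sign (fun t => φ (r₁ t)) hsign hlim1 hδneg.ne
        have hψlim : Tendsto (fun t => φ (g₂ t)) atTop (𝓝 δ) := tend_phi c ρ x g₂ hreg himg
        have hanti : Antitone (fun t => φ (g₂ t)) := by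
          intro s t hst
          show φ (g₂ t) ≤ φ (g₂ s)
          rw [hψeq s, hψeq t]
          have h3 : exp (-t + k) ≤ exp (-s + k) := exp_le_exp.mpr (by linarith)
          nlinarith [exp_pos (-t + k), exp_pos (-s + k)]
        exact anti_contra (fun t => φ (g₂ t)) hanti t₀ ht₀ hzero δ hψlim husign
  · -- g₂ is a circle
    obtain ⟨σ, k, hσ, hgt, -⟩ := param g₂ (hcirc c' ρ' hρ') hg₂ (hcirc_isometry c' ρ' hρ') hG.le
    have hgre : ∀ t, (g₂ t).re
        = c' + ρ' * (exp (σ * t + k) ^ 2 - 1) / (exp (σ * t + k) ^ 2 + 1) :=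
      fun t => by rw [hgt t]; rfl
    have hgim : ∀ t, (g₂ t).im = 2 * ρ' * exp (σ * t + k) / (exp (σ * t + k) ^ 2 + 1) :=
      fun t => by rw [hgt t]; rfl
    have hgre' : ∀ t, (g₂ t).re
        = c' + ρ' * ((exp (σ * t + k) ^ 2 - 1) / (exp (σ * t + k) ^ 2 + 1)) :=
      fun t => by rw [hgre t]; ring
    have hgcirc : ∀ t, ((g₂ t).re - c')^2 + (g₂ t).im^2 = ρ'^2 := by
      intro t
      have : g₂ t ∈ Set.range g₂ := ⟨t, rfl⟩
      rw [hG, range_hcirc] at this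
      exact this
    rcases hp with hpi | ⟨x, hpx⟩
    · -- p = ∞ : impossible since circle is bounded
      have hng : Tendsto (fun t => ‖(g₂ t : ℂ)‖) atTop atTop :=
        onePoint_infty_norm (hpi ▸ h₂)
      apply bdd_contra g₂ hng (ρ' + |c'|)
      intro t ht
      have hc1 : ‖(g₂ t : ℂ)‖ - ‖((c':ℝ) : ℂ)‖ ≤ ‖(g₂ t : ℂ) - (c' : ℂ)‖ :=
        norm_sub_norm_le _ _
      have hc2 : ‖((c':ℝ) : ℂ)‖ = |c'| := by
        rw [Complex.norm_real, Real.norm_eq_abs]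
      have hc3 := circ_norm (g₂ t) c'
      have hc4 := hgcirc t
      nlinarith [norm_nonneg ((g₂ t : ℂ) - (c' : ℂ))]
    · -- p = x real
      have hc1 : Tendsto (fun t => (r₁ t : ℂ)) atTop (𝓝 (x:ℂ)) :=
        onePoint_coe_tendsto (hpx ▸ h₁)
      have hcg : Tendsto (fun t => (g₂ t : ℂ)) atTop (𝓝 (x:ℂ)) :=
        onePoint_coe_tendsto (hpx ▸ h₂)
      obtain ⟨hre1, him1⟩ := tend_re_im hc1
      obtain ⟨hreg, himg⟩ := tend_re_im hcg
      -- the endpoint of g₂ : x = c' + σ * ρ'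
      have hx : x = c' + σ * ρ' := by
        rcases hσ with h | h
        · have hm1 : Tendsto (fun t => (g₂ t).re) atTop (𝓝 (c' + ρ' * 1)) := by
            have := (tendsto_const_nhds (x := c') (f := atTop (α := ℝ))).add
              ((tendsto_const_nhds (x := ρ') (f := atTop (α := ℝ))).mul (mdiv_comp_top k))
            apply this.congr
            intro t
            rw [hgre t, h, one_mul]
            ring
          have := tendsto_nhds_unique hreg hm1
          rw [this, h]; ring
        · have hm1 : Tendsto (fun t => (g₂ t).re) atTop (𝓝 (c' + ρ' * (-1))) := by
            have := (tendsto_const_nhds (x := c') (f := atTop (α := ℝ))).add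
              ((tendsto_const_nhds (x := ρ') (f := atTop (α := ℝ))).mul (mdiv_comp_bot k))
            apply this.congr
            intro t
            rw [hgre t, h]
            ring_nf
          have := tendsto_nhds_unique hreg hm1
          rw [this, h]; ring
      rcases hclassL with ⟨α, hL⟩ | ⟨c, ρ, hρ, hL⟩
      · -- L vertical line
        set φ : ℍ → ℝ := fun z => z.re - α with hφ
        have hφc : Continuous φ := UpperHalfPlane.continuous_re.sub continuous_const
        have hmemiff : ∀ z : ℍ, z ∈ L ↔ φ z = 0 := by
          intro z
          rw [hL, range_hline]
          simp only [Set.mem_setOf_eq, hφ, sub_eq_zero]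
        have hsign := path_sign φ hφc r₀ r₁ g₂ hr₀.continuous hr₁ T hT h00 h0T
          (fun t ht hzz => hno0 t ht ((hmemiff _).mpr hzz))
          (fun t ht hzz => hno1 t ht ((hmemiff _).mpr hzz))
        have hzero : φ (g₂ t₀) = 0 := (hmemiff _).mp hmemL
        by_cases hαx : α = x
        · -- asymptotic case: impossible since re g₂ stays strictly inside
          have hmm := mdiv_mem (exp_pos (σ * t₀ + k))
          have h5 : (g₂ t₀).re = α := by
            have := hzero; simp only [hφ] at this; linarith
          rw [hgre t₀] at h5
          rw [hαx, hx] at h5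
          have hrw : ρ' * (exp (σ * t₀ + k) ^ 2 - 1) / (exp (σ * t₀ + k) ^ 2 + 1)
              = ρ' * ((exp (σ * t₀ + k) ^ 2 - 1) / (exp (σ * t₀ + k) ^ 2 + 1)) := by ring
          rw [hrw] at h5
          rcases hσ with h | h <;> subst h <;>
            nlinarith [hmm.1, hmm.2, hρ']
        · -- transverse case: monotone crossing
          have hδ : x - α ≠ 0 := sub_ne_zero.mpr (Ne.symm hαx)
          have hlim1 : Tendsto (fun t => φ (r₁ t)) atTop (𝓝 (x - α)) := hre1.sub tendsto_const_nhds
          have husign : 0 < φ (g₂ 0) * (x - α) :=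
            limit_sign (fun t => φ (r₁ t)) hsign hlim1 hδ
          have hψlim : Tendsto (fun t => φ (g₂ t)) atTop (𝓝 (x - α)) := hreg.sub tendsto_const_nhds
          rcases hσ with h | h
          · have hmono : Monotone (fun t => φ (g₂ t)) := by
              intro s t hst
              show φ (g₂ s) ≤ φ (g₂ t)
              simp only [hφ]
              rw [hgre' s, hgre' t, h, one_mul, one_mul]
              have h8 := mdiv_le (exp_pos (s + k)).le (exp_le_exp.mpr (by linarith : s + k ≤ t + k))
              have h9 := mul_le_mul_of_nonneg_left h8 hρ'.le
              linarith
            exact mono_contra (fun t => φ (g₂ t)) hmono t₀ ht₀ hzero (x - α) hψlim husign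
          · have hmono : Antitone (fun t => φ (g₂ t)) := by
              intro s t hst
              show φ (g₂ t) ≤ φ (g₂ s)
              simp only [hφ]
              rw [hgre' s, hgre' t, h]
              have h6 : exp (-1 * t + k) ≤ exp (-1 * s + k) := exp_le_exp.mpr (by linarith)
              have h8 := mdiv_le (exp_pos (-1 * t + k)).le h6
              have h9 := mul_le_mul_of_nonneg_left h8 hρ'.le
              linarith
            exact anti_contra (fun t => φ (g₂ t)) hmono t₀ ht₀ hzero (x - α) hψlim husign
      · -- L circle
        set φ : ℍ → ℝ := fun z => (z.re - c)^2 + z.im^2 - ρ^2 with hφ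
        have hφc : Continuous φ := by
          apply Continuous.sub ?_ continuous_const
          exact ((UpperHalfPlane.continuous_re.sub continuous_const).pow 2).add
            (UpperHalfPlane.continuous_im.pow 2)
        have hmemiff : ∀ z : ℍ, z ∈ L ↔ φ z = 0 := by
          intro z
          rw [hL, range_hcirc]
          simp only [Set.mem_setOf_eq, hφ, sub_eq_zero]
        have hsign := path_sign φ hφc r₀ r₁ g₂ hr₀.continuous hr₁ T hT h00 h0T
          (fun t ht hzz => hno0 t ht ((hmemiff _).mpr hzz))
          (fun t ht hzz => hno1 t ht ((hmemiff _).mpr hzz))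
        have hzero : φ (g₂ t₀) = 0 := (hmemiff _).mp hmemL
        by_cases hcc : c = c'
        · -- same center: L equals the geodesic of g₂, so the start point is on L
          have hρρ : ρ = ρ' := by
            have h5 : ((g₂ t₀).re - c)^2 + (g₂ t₀).im^2 = ρ^2 := by
              have := hzero; simp only [hφ] at this; linarith
            have h6 := hgcirc t₀
            rw [hcc] at h5
            nlinarith [hρ, hρ']
          apply hstart
          rw [hL, range_hcirc]
          show ((g₂ 0).re - c)^2 + (g₂ 0).im^2 = ρ^2
          rw [hcc, hρρ]
          exact hgcirc 0
        · -- different centers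
          set δ : ℝ := (x - c)^2 - ρ^2 with hδ
          by_cases hδ0 : δ = 0
          · -- L also ends at x : two circles through the same boundary point
            have hE1 : ((g₂ t₀).re - c)^2 + (g₂ t₀).im^2 = ρ^2 := by
              have := hzero; simp only [hφ] at this; linarith
            have hE2 := hgcirc t₀
            have hE3 : (x - c)^2 = ρ^2 := by
              have := hδ0; rw [hδ] at this; linarith
            have hE4 : (x - c')^2 = ρ'^2 := by
              rw [hx]
              rcases hσ with h | h <;> rw [h] <;> ring
            have hwx : (g₂ t₀).re = x := by
              have h5 : 2*(c' - c)*((g₂ t₀).re - x) = 0 := by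
                linear_combination hE1 - hE2 - hE3 + hE4
              have h6 : (c' - c) ≠ 0 := sub_ne_zero.mpr (Ne.symm hcc)
              have h7 : (g₂ t₀).re - x = 0 := by
                rcases mul_eq_zero.mp h5 with h8 | h8
                · rcases mul_eq_zero.mp h8 with h9 | h9
                  · norm_num at h9
                  · exact absurd h9 h6
                · exact h8
              linarith
            have hv := (g₂ t₀).im_pos
            rw [hwx] at hE1
            nlinarith [hE1, hE3, hv]
          · -- transverse case
            have hlim1 : Tendsto (fun t => φ (r₁ t)) atTop (𝓝 δ) := tend_phi c ρ x r₁ hre1 him1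
            have husign : 0 < φ (g₂ 0) * δ :=
              limit_sign (fun t => φ (r₁ t)) hsign hlim1 hδ0
            have hψlim : Tendsto (fun t => φ (g₂ t)) atTop (𝓝 δ) := tend_phi c ρ x g₂ hreg himg
            -- φ along g₂ is affine in the circle parameter
            have hψeq : ∀ t, φ (g₂ t) = 2*(c' - c)*ρ'*((exp (σ * t + k)^2 - 1)/(exp (σ * t + k)^2 + 1))
                + ((c' - c)^2 + ρ'^2 - ρ^2) := by
              intro t
              simp only [hφ]
              linear_combination hgcirc t + (2*(c' - c)) * hgre t
            rcases hσ with h | h <;> rcases lt_or_gt_of_ne (sub_ne_zero.mpr (Ne.symm hcc) :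
                (c' - c) ≠ 0) with hsgn | hsgn
            · -- σ = 1, c' < c : antitone
              have hmono : Antitone (fun t => φ (g₂ t)) := by
                intro s t hst
                show φ (g₂ t) ≤ φ (g₂ s)
                rw [hψeq s, hψeq t, h]
                have h8 := mdiv_le (exp_pos (1 * s + k)).le
                  (exp_le_exp.mpr (by linarith : 1 * s + k ≤ 1 * t + k))
                have h9 := mul_le_mul_of_nonpos_left h8
                  (by nlinarith [hρ'] : 2 * (c' - c) * ρ' ≤ 0)
                linarith
              exact anti_contra (fun t => φ (g₂ t)) hmono t₀ ht₀ hzero δ hψlim husign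
            · -- σ = 1, c' > c : monotone
              have hmono : Monotone (fun t => φ (g₂ t)) := by
                intro s t hst
                show φ (g₂ s) ≤ φ (g₂ t)
                rw [hψeq s, hψeq t, h]
                have h8 := mdiv_le (exp_pos (1 * s + k)).le
                  (exp_le_exp.mpr (by linarith : 1 * s + k ≤ 1 * t + k))
                have h9 := mul_le_mul_of_nonneg_left h8
                  (by nlinarith [hρ'] : 0 ≤ 2 * (c' - c) * ρ')
                linarith
              exact mono_contra (fun t => φ (g₂ t)) hmono t₀ ht₀ hzero δ hψlim husign
            · -- σ = -1, c' < c : monotone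
              have hmono : Monotone (fun t => φ (g₂ t)) := by
                intro s t hst
                show φ (g₂ s) ≤ φ (g₂ t)
                rw [hψeq s, hψeq t, h]
                have h8 := mdiv_le (exp_pos (-1 * t + k)).le
                  (exp_le_exp.mpr (by linarith : -1 * t + k ≤ -1 * s + k))
                have h9 := mul_le_mul_of_nonpos_left h8
                  (by nlinarith [hρ'] : 2 * (c' - c) * ρ' ≤ 0)
                linarith
              exact mono_contra (fun t => φ (g₂ t)) hmono t₀ ht₀ hzero δ hψlim husign
            · -- σ = -1, c' > c : antitone
              have hmono : Antitone (fun t => φ (g₂ t)) := by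
                intro s t hst
                show φ (g₂ t) ≤ φ (g₂ s)
                rw [hψeq s, hψeq t, h]
                have h8 := mdiv_le (exp_pos (-1 * t + k)).le
                  (exp_le_exp.mpr (by linarith : -1 * t + k ≤ -1 * s + k))
                have h9 := mul_le_mul_of_nonneg_left h8
                  (by nlinarith [hρ'] : 0 ≤ 2 * (c' - c) * ρ')
                linarith
              exact anti_contra (fun t => φ (g₂ t)) hmono t₀ ht₀ hzero δ hψlim husign

end AuxiliaryGeodesicLemmas

/-- Let `M` be a measured geodesic lamination on `ℍ²` (with locally
finite transverse measure), `r₁ : [0,∞) → ℍ` a continuous (piecewise smooth) curve and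
`r₂` a geodesic ray, both converging to the same point `p` of the boundary circle
`S¹_∞ = ℝ ∪ {∞}`. If `I(M, r₁) < ∞` then `I(M, r₂) < ∞`; more precisely
`I(M, r₂) ≤ I(M, r₁) + I(M, r₀)` where `r₀` is the geodesic segment from `r₂ 0`
to `r₁ 0`. -/
theorem finite_intersection_of_asymptotic (M : MeasuredGeodesicLamination)
    (hloc : ∀ K : Set ℍ, IsCompact K → M.μ {L | L ∈ M.leaves ∧ (L ∩ K).Nonempty} < ⊤)
    (r₁ : ℝ → ℍ) (hr₁ : Continuous r₁)
    (r₂ : ℝ → ℍ) (g₂ : ℝ → ℍ) (hg₂ : Isometry g₂) (hray : ∀ t : ℝ, 0 ≤ t → r₂ t = g₂ t)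
    (p : OnePoint ℂ) (hp : p = OnePoint.infty ∨ ∃ x : ℝ, p = ((x : ℂ) : OnePoint ℂ))
    (h₁ : Tendsto (fun t : ℝ => (((r₁ t : ℂ)) : OnePoint ℂ)) atTop (𝓝 p))
    (h₂ : Tendsto (fun t : ℝ => (((r₂ t : ℂ)) : OnePoint ℂ)) atTop (𝓝 p))
    (r₀ : ℝ → ℍ) (T : ℝ) (hT : 0 ≤ T) (hr₀ : Isometry r₀)
    (h00 : r₀ 0 = r₂ 0) (h0T : r₀ T = r₁ 0) :
    M.I r₂ (Set.Ici 0) ≤ M.I r₁ (Set.Ici 0) + M.I r₀ (Set.Icc 0 T) ∧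
      (M.I r₁ (Set.Ici 0) < ⊤ → M.I r₂ (Set.Ici 0) < ⊤) := by
  have h₂' : Tendsto (fun t : ℝ => ((g₂ t : ℂ) : OnePoint ℂ)) atTop (𝓝 p) := by
    apply h₂.congr'
    filter_upwards [eventually_ge_atTop (0:ℝ)] with t ht
    rw [hray t ht]
  have h00' : r₀ 0 = g₂ 0 := by rw [h00, hray 0 le_rfl]
  have hsub : {L | L ∈ M.leaves ∧ ∃ t ∈ Set.Ici (0:ℝ), r₂ t ∈ L} ⊆
      {L | L ∈ M.leaves ∧ ∃ t ∈ Set.Ici (0:ℝ), r₁ t ∈ L} ∪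
      {L | L ∈ M.leaves ∧ ∃ t ∈ Set.Icc (0:ℝ) T, r₀ t ∈ L} := by
    rintro L ⟨hL, t₀, ht₀, hmem⟩
    rw [Set.mem_union]
    by_contra hcon
    push_neg at hcon
    obtain ⟨h1, h0⟩ := hcon
    have hno1 : ∀ t, 0 ≤ t → r₁ t ∉ L := fun t ht hm =>
      h1 ⟨hL, t, Set.mem_Ici.mpr ht, hm⟩
    have hno0 : ∀ t, t ∈ Set.Icc 0 T → r₀ t ∉ L := fun t ht hm => h0 ⟨hL, t, ht, hm⟩
    obtain ⟨f, hfiso, hrange⟩ := M.geodesic L hL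
    have hmem' : g₂ t₀ ∈ L := by rw [← hray t₀ (Set.mem_Ici.mp ht₀)]; exact hmem
    exact core r₁ hr₁ g₂ hg₂ p hp h₁ h₂' r₀ T hT hr₀ h00' h0T L f hfiso hrange t₀
      (Set.mem_Ici.mp ht₀) hmem' hno1 hno0
  have hmain : M.I r₂ (Set.Ici 0) ≤ M.I r₁ (Set.Ici 0) + M.I r₀ (Set.Icc 0 T) := by
    calc M.μ {L | L ∈ M.leaves ∧ ∃ t ∈ Set.Ici (0:ℝ), r₂ t ∈ L}
        ≤ M.μ ({L | L ∈ M.leaves ∧ ∃ t ∈ Set.Ici (0:ℝ), r₁ t ∈ L} ∪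
          {L | L ∈ M.leaves ∧ ∃ t ∈ Set.Icc (0:ℝ) T, r₀ t ∈ L}) := measure_mono hsub
      _ ≤ _ := measure_union_le _ _
  refine ⟨hmain, fun h1fin => ?_⟩
  have h0fin : M.I r₀ (Set.Icc 0 T) < ⊤ := by
    have hK : IsCompact (r₀ '' Set.Icc 0 T) := isCompact_Icc.image hr₀.continuous
    refine lt_of_le_of_lt (measure_mono ?_) (hloc _ hK)
    rintro L ⟨hL, t, ht, hm⟩
    exact ⟨hL, r₀ t, hm, Set.mem_image_of_mem _ ht⟩
  exact lt_of_le_of_lt hmain (ENNReal.add_lt_top.mpr ⟨h1fin, h0fin⟩)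

end
end

section
/- Let (a_n) be a sequence of positive reals with a_n/3 > Σ_{k=n+1}^∞ a_k for all n. For an infinite subset S = {n_1 < n_2 < ...} of ℕ, let T(S) denote the set of tails Σ_{k≥m} a_{n_k}. If two infinite subsets S, S' of ℕ do not eventually coincide (their indicator sequences have different tails), then the corresponding tail-sum sequences differ: there exist tails of the two associated series that are unequal. Consequently, the map sending an infinite subset of ℕ to the tail-equivalence class of its associated subseries is injective on tail-equivalence classes, and there are uncountably many tail-equivalence classes of infinite subsets of ℕ. -/
/-!
Dominance `∑_{k>n} a_k < a_n` makes a subseries tail `∑_{k≥m} a_{s_k}` determined by its leading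
index `s_m`: a tail starting at a larger index is bounded by `∑_{k>s_m} a_k < a_{s_m}`. Peeling
off leading terms, equal tails force the index sequences to agree from then on.

For uncountability, the binary codes of the successive prefixes of `x : ℕ → Bool` increase, and
a code fixes both the length and the prefix, so two such sequences sharing a tail come from the
same `x`.
-/

/-- Two sequences `u, v` *have the same tail* if they agree from some point on
(up to an index shift). -/
def SameTail {α : Type*} (u v : ℕ → α) : Prop :=
  ∃ m m' : ℕ, ∀ j : ℕ, u (m + j) = v (m' + j)

/-- The `m`-th tail sum of the subseries of `a` indexed by the (strictly monotone)
sequence `s`. -/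
noncomputable def tailSum (a : ℕ → ℝ) (s : ℕ → ℕ) (m : ℕ) : ℝ :=
  ∑' k : ℕ, a (s (m + k))

section TailSum

variable {a : ℕ → ℝ} {s s' : ℕ → ℕ}

lemma summable_comp_add (hsum : Summable a) (hs : StrictMono s) (m : ℕ) :
    Summable fun k => a (s (m + k)) :=
  hsum.comp_injective (hs.injective.comp (add_right_injective m))

lemma tailSum_eq_add_tailSum_succ (hsum : Summable a) (hs : StrictMono s) (m : ℕ) :
    tailSum a s m = a (s m) + tailSum a s (m + 1) := by
  rw [tailSum, (summable_comp_add hsum hs m).tsum_eq_zero_add, tailSum]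
  simp only [add_zero, add_assoc, add_comm 1]

lemma le_tailSum (ha : ∀ n, 0 ≤ a n) (hsum : Summable a) (hs : StrictMono s) (m : ℕ) :
    a (s m) ≤ tailSum a s m := by
  simpa [tailSum] using (summable_comp_add hsum hs m).le_tsum 0 fun k _ => ha _

lemma tailSum_le_tsum_of_lt (ha : ∀ n, 0 ≤ a n) (hsum : Summable a) (hs : StrictMono s)
    {m N : ℕ} (hN : N < s m) : tailSum a s m ≤ ∑' k, a (N + 1 + k) := by
  have hge : ∀ k, N + 1 ≤ s (m + k) := fun k => by
    have := hs.monotone (Nat.le_add_right m k); omega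
  refine (summable_comp_add hsum hs m).tsum_le_tsum_of_inj (fun k => s (m + k) - (N + 1))
    (fun k l hkl => ?_) (fun _ _ => ha _) (fun k => ?_)
    (hsum.comp_injective (add_right_injective (N + 1)))
  · have := hge k; have := hge l
    simp only at hkl
    have : m + k = m + l := hs.injective (by omega)
    omega
  · rw [Nat.add_sub_cancel' (hge k)]

lemma tailSum_lt_of_lt (ha : ∀ n, 0 ≤ a n) (hsum : Summable a)
    (hdom : ∀ n, ∑' k, a (n + 1 + k) < a n) (hs : StrictMono s) (hs' : StrictMono s')
    {m m' : ℕ} (h : s m < s' m') : tailSum a s' m' < tailSum a s m :=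
  calc tailSum a s' m' ≤ ∑' k, a (s m + 1 + k) := tailSum_le_tsum_of_lt ha hsum hs' h
    _ < a (s m) := hdom (s m)
    _ ≤ tailSum a s m := le_tailSum ha hsum hs m

lemma eq_of_tailSum_eq (ha : ∀ n, 0 ≤ a n) (hsum : Summable a)
    (hdom : ∀ n, ∑' k, a (n + 1 + k) < a n) (hs : StrictMono s) (hs' : StrictMono s')
    {m m' : ℕ} (h : tailSum a s m = tailSum a s' m') : s m = s' m' :=
  le_antisymm
    (not_lt.1 fun hlt => (tailSum_lt_of_lt ha hsum hdom hs' hs hlt).ne h)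
    (not_lt.1 fun hlt => (tailSum_lt_of_lt ha hsum hdom hs hs' hlt).ne' h)

lemma apply_add_eq_of_tailSum_eq (ha : ∀ n, 0 ≤ a n) (hsum : Summable a)
    (hdom : ∀ n, ∑' k, a (n + 1 + k) < a n) (hs : StrictMono s) (hs' : StrictMono s')
    {m m' : ℕ} (h : tailSum a s m = tailSum a s' m') (j : ℕ) : s (m + j) = s' (m' + j) := by
  induction j generalizing m m' with
  | zero => exact eq_of_tailSum_eq ha hsum hdom hs hs' h
  | succ j ih =>
    have hhead := eq_of_tailSum_eq ha hsum hdom hs hs' h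
    rw [tailSum_eq_add_tailSum_succ hsum hs, tailSum_eq_add_tailSum_succ hsum hs', hhead,
      add_right_inj] at h
    simpa only [add_assoc, add_comm 1] using ih h

lemma sameTail_of_sameTail_tailSum (ha : ∀ n, 0 ≤ a n) (hsum : Summable a)
    (hdom : ∀ n, ∑' k, a (n + 1 + k) < a n) (hs : StrictMono s) (hs' : StrictMono s')
    (h : SameTail (tailSum a s) (tailSum a s')) : SameTail s s' := by
  obtain ⟨m, m', hm⟩ := h
  exact ⟨m, m', apply_add_eq_of_tailSum_eq ha hsum hdom hs hs' (by simpa using hm 0)⟩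

end TailSum

section PrefixCode

/-- `prefixCode x n` has binary digits `1 x₀ x₁ … x_{n-1}`. -/
def prefixCode (x : ℕ → Bool) : ℕ → ℕ
  | 0 => 1
  | n + 1 => 2 * prefixCode x n + (x n).toNat

lemma prefixCode_mem_Ico (x : ℕ → Bool) (n : ℕ) :
    prefixCode x n ∈ Set.Ico (2 ^ n) (2 ^ (n + 1)) := by
  induction n with
  | zero => simp [prefixCode]
  | succ n ih =>
    obtain ⟨h₁, h₂⟩ := ih
    have := Bool.toNat_le (x n)
    constructor <;> simp only [prefixCode, pow_succ] at * <;> omega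

lemma strictMono_prefixCode (x : ℕ → Bool) : StrictMono (prefixCode x) :=
  strictMono_nat_of_lt_succ fun n => by
    have := (prefixCode_mem_Ico x n).1
    have := Nat.one_le_two_pow (n := n)
    simp only [prefixCode]; omega

lemma eq_of_prefixCode_eq_prefixCode {x y : ℕ → Bool} {n n' : ℕ}
    (h : prefixCode x n = prefixCode y n') : n = n' := by
  obtain ⟨hx₁, hx₂⟩ := prefixCode_mem_Ico x n
  obtain ⟨hy₁, hy₂⟩ := prefixCode_mem_Ico y n'
  rw [h] at hx₁ hx₂
  have := (Nat.pow_lt_pow_iff_right (by norm_num : 1 < 2)).1 (hx₁.trans_lt hy₂)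
  have := (Nat.pow_lt_pow_iff_right (by norm_num : 1 < 2)).1 (hy₁.trans_lt hx₂)
  omega

lemma apply_eq_of_prefixCode_eq_prefixCode {x y : ℕ → Bool} {n : ℕ}
    (h : prefixCode x n = prefixCode y n) : ∀ i < n, x i = y i := by
  induction n with
  | zero => simp
  | succ n ih =>
    have hx := Bool.toNat_le (x n)
    have hy := Bool.toNat_le (y n)
    simp only [prefixCode] at h
    have hcode : prefixCode x n = prefixCode y n := by omega
    have hbit : (x n).toNat = (y n).toNat := by omega
    intro i hi
    rcases Nat.lt_succ_iff_lt_or_eq.1 hi with hi | rfl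
    · exact ih hcode i hi
    · revert hbit; cases x i <;> cases y i <;> simp

lemma eq_of_sameTail_prefixCode {x y : ℕ → Bool} (h : SameTail (prefixCode x) (prefixCode y)) :
    x = y := by
  obtain ⟨m, m', hm⟩ := h
  obtain rfl : m = m' := eq_of_prefixCode_eq_prefixCode (by simpa using hm 0)
  funext i
  exact apply_eq_of_prefixCode_eq_prefixCode (hm (i + 1)) i (by omega)

lemma prefixCode_injective : Function.Injective prefixCode :=
  fun _ _ h => eq_of_sameTail_prefixCode ⟨0, 0, fun j => by rw [h]⟩

end PrefixCode

lemma uncountable_nat_to_bool : Uncountable (ℕ → Bool) := by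
  rw [← Cardinal.aleph0_lt_mk_iff]
  simpa using Cardinal.aleph0_lt_continuum

/-- Let `(a_n)` be positive with `a_n/3 > Σ_{k>n} a_k` for all `n`.
If two infinite subsets of `ℕ` (encoded as strictly monotone sequences) do not have the
same tail, then their tail-sum sequences do not have the same tail; in particular the map
from tail-equivalence classes of infinite subsets to tail-equivalence classes of
subseries is injective. Moreover, there are uncountably many tail-equivalence classes of
infinite subsets of `ℕ`: there is an uncountable family of strictly monotone sequences,
pairwise not sharing a tail. -/
theorem tail_sums_distinguish (a : ℕ → ℝ) (hpos : ∀ n, 0 < a n) (hsum : Summable a)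
    (hdom : ∀ n : ℕ, (∑' k : ℕ, a (n + 1 + k)) < a n / 3) :
    (∀ s s' : ℕ → ℕ, StrictMono s → StrictMono s' → ¬ SameTail s s' →
      ¬ SameTail (tailSum a s) (tailSum a s')) ∧
    ∃ S : Set (ℕ → ℕ), (∀ s ∈ S, StrictMono s) ∧ ¬ S.Countable ∧
      S.Pairwise fun s s' => ¬ SameTail s s' := by
  have ha n : 0 ≤ a n := (hpos n).le
  have hdom' n : ∑' k, a (n + 1 + k) < a n := (hdom n).trans (by linarith [hpos n])
  refine ⟨fun s s' hs hs' hne h => hne (sameTail_of_sameTail_tailSum ha hsum hdom' hs hs' h),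
    Set.range prefixCode, ?_, ?_, ?_⟩
  · rintro _ ⟨x, rfl⟩
    exact strictMono_prefixCode x
  · intro hS
    have := hS.to_subtype
    exact uncountable_nat_to_bool.not_countable
      (Equiv.ofInjective _ prefixCode_injective).injective.countable
  · rintro _ ⟨x, rfl⟩ _ ⟨y, rfl⟩ hne h
    exact hne (congrArg prefixCode (eq_of_sameTail_prefixCode h))
end
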